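/- arXiv:2303.12046 — 4 statements merged into one kernel-verified Lean document; each statement's English description precedes it below -/
import Mathlib

section
/- Let $F$ be a graph and fix a proper colouring of $F$ with $\chi(F)$ colours whose colour class $I_{\max}$ has maximum size among all colour classes over all proper $\chi(F)$-colourings of $F$. Let $H$ be a graph whose vertex set is partitioned into sets $A$ and $B$, where $H[A]$ is isomorphic to $F \setminus (I_{\max} \cup \{v\})$ for some vertex $v \in V(F)\setminus I_{\max}$ with $N_F(v) \subseteq I_{\max}$, where $B$ is an independent set in $H$, and all possible edges between $A$ and $B$ are present in $H$. Then $H$ contains no copy of $F$. -/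
def HasCopy {α β : Type*} (F : SimpleGraph α) (H : SimpleGraph β) : Prop :=
  ∃ f : α → β, Function.Injective f ∧ ∀ a b, F.Adj a b → H.Adj (f a) (f b)

theorem stmt3 {VF W : Type*} [Fintype VF] (F : SimpleGraph VF)
    (n : ℕ) (hchi : F.chromaticNumber = n) (C : F.Coloring (Fin n)) (c : Fin n)
    (hmax : ∀ (C' : F.Coloring (Fin n)) (c' : Fin n),
      {x | C' x = c'}.ncard ≤ {x | C x = c}.ncard)
    (v : VF) (hv : C v ≠ c) (hNv : ∀ u, F.Adj v u → C u = c)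
    (H : SimpleGraph W) (A : Set W)
    (hiso : Nonempty ((H.induce A) ≃g (F.induce (({x | C x = c} ∪ {v})ᶜ : Set VF))))
    (hBindep : ∀ a b, a ∉ A → b ∉ A → ¬ H.Adj a b)
    (hAB : ∀ a b, a ∈ A → b ∉ A → H.Adj a b) :
    ¬ HasCopy F H := by
  classical
  rintro ⟨f, hfinj, hfadj⟩
  set I : Set VF := {x | C x = c} with hI
  set S : Set VF := (I ∪ {v})ᶜ with hS
  obtain ⟨φ⟩ := hiso
  let g : VF → Fin n := fun x => if h : f x ∈ A then C (φ ⟨f x, h⟩).val else c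
  have hgne : ∀ x (h : f x ∈ A), C (φ ⟨f x, h⟩).val ≠ c := by
    intro x h
    have hp := (φ ⟨f x, h⟩).prop
    simp only [hS, Set.mem_compl_iff, Set.mem_union, hI, Set.mem_setOf_eq,
      Set.mem_singleton_iff, not_or] at hp
    exact hp.1
  have hvalid : ∀ {x y : VF}, F.Adj x y → g x ≠ g y := by
    intro x y hxy
    have hH := hfadj x y hxy
    by_cases hx : f x ∈ A <;> by_cases hy : f y ∈ A
    · simp only [g, dif_pos hx, dif_pos hy]
      have hadj : (H.induce A).Adj ⟨f x, hx⟩ ⟨f y, hy⟩ := by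
        simpa using hH
      have h2 : (F.induce S).Adj (φ ⟨f x, hx⟩) (φ ⟨f y, hy⟩) := φ.map_adj_iff.mpr hadj
      have h3 : F.Adj (φ ⟨f x, hx⟩).val (φ ⟨f y, hy⟩).val := by
        simpa using h2
      exact C.valid h3
    · simp only [g, dif_pos hx, dif_neg hy]
      exact hgne x hx
    · simp only [g, dif_neg hx, dif_pos hy]
      exact fun h => hgne y hy h.symm
    · exact absurd hH (hBindep _ _ hx hy)
  let C' : F.Coloring (Fin n) := SimpleGraph.Coloring.mk g fun h => hvalid h
  have hkey := hmax C' c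
  have hCc : {x | C' x = c} = {x | f x ∉ A} := by
    ext x
    simp only [Set.mem_setOf_eq]
    constructor
    · intro h hx
      have hgx : g x = c := h
      simp only [g] at hgx
      rw [dif_pos hx] at hgx
      exact hgne x hx hgx
    · intro h
      show g x = c
      simp [g, dif_neg h]
  rw [hCc] at hkey
  -- count
  set T : Set VF := {x | f x ∈ A} with hT
  have hTc : {x | f x ∉ A} = Tᶜ := rfl
  rw [hTc] at hkey
  have hTS : T.ncard ≤ S.ncard := by
    apply Set.ncard_le_ncard_of_injOn (fun x => if h : f x ∈ A then (φ ⟨f x, h⟩).val else v)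
    · intro x hx
      simp only [hT, Set.mem_setOf_eq] at hx
      simp only [dif_pos hx]
      exact (φ ⟨f x, hx⟩).prop
    · intro x hx y hy hxy
      simp only [hT, Set.mem_setOf_eq] at hx hy
      simp only [dif_pos hx, dif_pos hy] at hxy
      have := φ.injective (Subtype.val_injective hxy)
      exact hfinj (by simpa using this)
  have h1 : T.ncard + Tᶜ.ncard = Fintype.card VF := by
    rw [Set.ncard_add_ncard_compl, Nat.card_eq_fintype_card]
  have h2 : S.ncard + Sᶜ.ncard = Fintype.card VF := by
    rw [Set.ncard_add_ncard_compl, Nat.card_eq_fintype_card]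
  have h2' : Sᶜ = I ∪ {v} := by rw [hS, compl_compl]
  rw [h2'] at h2
  have h3 : (I ∪ {v}).ncard = I.ncard + 1 := by
    rw [Set.union_singleton, Set.ncard_insert_of_notMem (by simpa [hI] using hv)
      (Set.toFinite I)]
  omega
end

section
/- Let $F$ be a graph with an edge $\{u,v\}$ such that there exists a proper colouring of $F$ with $\chi(F)$ colours in which $\{u\}$ and $\{v\}$ are singleton colour classes, and suppose that for every independent set $I \subseteq V(F)$, the induced subgraph $F[V(F) \setminus I]$ is two-vertex-connected. Then $F$ satisfies property $(\star)$. -/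
/-- A graph is two-vertex-connected if it has at least 3 vertices, is connected, and
remains connected after deleting any single vertex. -/
def TwoConnected {α : Type*} (G : SimpleGraph α) : Prop :=
  3 ≤ Nat.card α ∧ G.Connected ∧ ∀ v : α, (G.induce {u | u ≠ v}).Connected

/-- `B` is `A`-degenerate if every two-vertex-connected subgraph of `B` is a subgraph of `A`. -/
def Degenerate {α β : Type*} (B : SimpleGraph α) (A : SimpleGraph β) : Prop :=
  ∀ H : B.Subgraph, TwoConnected H.coe → HasCopy H.coe A

/-- Property `(⋆)`: there is an edge `{u,v}` such that for every independent set `I`,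
`F[V \ I]` is not `F[V \ {u,v}]`-degenerate. -/
def PropStar {V : Type*} (F : SimpleGraph V) : Prop :=
  ∃ u v, F.Adj u v ∧ ∀ I : Set V, (∀ a ∈ I, ∀ b ∈ I, ¬ F.Adj a b) →
    ¬ Degenerate (F.induce Iᶜ) (F.induce ({u, v}ᶜ : Set V))

/-- Transport `TwoConnected` along a graph isomorphism. -/
lemma twoConnected_of_iso {α β : Type*} {G : SimpleGraph α} {H : SimpleGraph β}
    (e : G ≃g H) (h : TwoConnected G) : TwoConnected H := by
  obtain ⟨h3, hc, hd⟩ := h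
  refine ⟨by rwa [← Nat.card_congr e.toEquiv], e.connected_iff.mp hc, fun w => ?_⟩
  have e' : (G.induce {x | x ≠ e.symm w}) ≃g (H.induce {y | y ≠ w}) :=
    { toEquiv := e.toEquiv.subtypeEquiv (fun x => by
        constructor
        · intro h hxw; exact h (by simp [← hxw])
        · intro h hx; exact h (by simp [hx]))
      map_rel_iff' := by
        intro a b
        simp only [SimpleGraph.comap_adj, Function.Embedding.coe_subtype, Equiv.subtypeEquiv_apply]
        exact e.map_adj_iff }
  exact e'.connected_iff.mp (hd (e.symm w))

theorem stmt4 {V : Type*} [Fintype V] (F : SimpleGraph V) (u v : V) (huv : F.Adj u v)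
    (n : ℕ) (hchi : F.chromaticNumber = n) (C : F.Coloring (Fin n))
    (hu : {x | C x = C u} = {u}) (hv : {x | C x = C v} = {v})
    (h2conn : ∀ I : Set V, (∀ a ∈ I, ∀ b ∈ I, ¬ F.Adj a b) →
      TwoConnected (F.induce Iᶜ)) :
    PropStar F := by
  refine ⟨u, v, huv, fun I hI hdeg => ?_⟩
  set G := F.induce Iᶜ with hG
  have h2 : TwoConnected ((⊤ : G.Subgraph).coe) :=
    twoConnected_of_iso (SimpleGraph.Subgraph.topIso).symm (h2conn I hI)
  obtain ⟨f, hfinj, hfadj⟩ := hdeg ⊤ h2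
  -- g maps Iᶜ into {u,v}ᶜ preserving adjacency
  set g : ↥Iᶜ → ↥({u, v}ᶜ : Set V) := fun x => f ⟨x, Set.mem_univ x⟩ with hgdef
  have hgadj : ∀ a b : ↥Iᶜ, G.Adj a b → F.Adj (g a) (g b) := by
    intro a b hab
    have : (⊤ : G.Subgraph).coe.Adj ⟨a, Set.mem_univ a⟩ ⟨b, Set.mem_univ b⟩ := by
      simpa using hab
    have := hfadj _ _ this
    simpa [SimpleGraph.comap_adj] using this
  have hgu : ∀ a : ↥Iᶜ, C (g a) ≠ C u := by
    intro a hca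
    have : ((g a : V)) ∈ {x | C x = C u} := hca
    rw [hu] at this
    exact (g a).2 (Or.inl this)
  have hgv : ∀ a : ↥Iᶜ, C (g a) ≠ C v := by
    intro a hca
    have : ((g a : V)) ∈ {x | C x = C v} := hca
    rw [hv] at this
    exact (g a).2 (Or.inr this)
  -- build a coloring of F avoiding the color C v
  classical
  have hCuv : C u ≠ C v := C.valid huv
  let c : V → {k : Fin n // k ≠ C v} := fun x =>
    if hx : x ∈ I then ⟨C u, hCuv⟩ else ⟨C (g ⟨x, hx⟩), hgv _⟩
  have hcvalid : ∀ {a b : V}, F.Adj a b → c a ≠ c b := by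
    intro a b hab
    by_cases ha : a ∈ I <;> by_cases hb : b ∈ I
    · exact absurd hab (hI a ha b hb)
    · simp only [c, dif_pos ha, dif_neg hb, ne_eq, Subtype.mk.injEq]
      exact fun h => hgu ⟨b, hb⟩ h.symm
    · simp only [c, dif_neg ha, dif_pos hb, ne_eq, Subtype.mk.injEq]
      exact fun h => hgu ⟨a, ha⟩ h
    · simp only [c, dif_neg ha, dif_neg hb, ne_eq, Subtype.mk.injEq]
      have : G.Adj ⟨a, ha⟩ ⟨b, hb⟩ := by simpa [hG, SimpleGraph.comap_adj] using hab
      exact C.valid (hgadj _ _ this)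
  let C' : F.Coloring {k : Fin n // k ≠ C v} := SimpleGraph.Coloring.mk c (fun h => hcvalid h)
  have hcard : Fintype.card {k : Fin n // k ≠ C v} = n - 1 := by
    simp [Fintype.card_subtype_compl (p := fun k : Fin n => k = C v),
      Fintype.card_subtype_eq]
  have hcolorable : F.Colorable (n - 1) := hcard ▸ C'.colorable
  have hle : F.chromaticNumber ≤ (n - 1 : ℕ) := hcolorable.chromaticNumber_le
  rw [hchi] at hle
  have hn : 0 < n := Fin.pos (C u)
  have : (n : ℕ∞) ≤ (n - 1 : ℕ) := hle
  have := Nat.cast_le.mp this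
  omega
end

section
/- Let $N$ be a positive integer, $p \in (0,1)$, and let $X \sim \mathrm{Bin}(N,p)$. Then $\mathbb{P}(X \le N/\ln^2 N) \le (1-p)^{N - N/\ln N}$ for $N$ sufficiently large. -/
open Real Filter Finset

theorem stmt5 (p : ℝ) (hp : 0 < p) (hp1 : p < 1) :
    ∃ N₀ : ℕ, ∀ N : ℕ, N₀ ≤ N →
      (∑ k ∈ Finset.range (N + 1),
        if (k : ℝ) ≤ (N : ℝ) / (Real.log N) ^ 2 then
          (N.choose k : ℝ) * p ^ k * (1 - p) ^ (N - k) else 0)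
      ≤ (1 - p) ^ ((N : ℝ) - (N : ℝ) / Real.log N) := by
  set q := 1 - p with hqdef
  have hq : 0 < q := by simp only [hqdef]; linarith
  have hq1 : q < 1 := by simp only [hqdef]; linarith
  have hlogq : Real.log q < 0 := Real.log_neg hq hq1
  set c := -Real.log q with hcdef
  have hc : 0 < c := by simp only [hcdef]; linarith
  have hev : ∀ᶠ (N : ℕ) in atTop,
      3 ≤ N ∧ (p / q) * Real.log N ≤ (c / 2) * (N : ℝ) ^ (c / 2 : ℝ) := by
    have hlo := (isLittleO_log_rpow_atTop (by positivity : (0:ℝ) < c / 2)).def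
      (by positivity : (0:ℝ) < (c / 2) / (p / q))
    have hevR : ∀ᶠ (x : ℝ) in atTop,
        (p / q) * Real.log x ≤ (c / 2) * x ^ (c / 2 : ℝ) := by
      filter_upwards [hlo, eventually_ge_atTop (1 : ℝ)] with x hx hx1
      have hlog : 0 ≤ Real.log x := Real.log_nonneg hx1
      have hxp : 0 ≤ x ^ (c / 2 : ℝ) := Real.rpow_nonneg (by linarith) _
      rw [Real.norm_eq_abs, Real.norm_eq_abs, abs_of_nonneg hlog, abs_of_nonneg hxp] at hx
      have hpq : 0 < p / q := by positivity
      calc (p / q) * Real.log x ≤ (p / q) * ((c / 2) / (p / q) * x ^ (c / 2 : ℝ)) := by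
            exact mul_le_mul_of_nonneg_left hx hpq.le
        _ = (c / 2) * x ^ (c / 2 : ℝ) := by field_simp
    have := tendsto_natCast_atTop_atTop.eventually hevR
    filter_upwards [this, eventually_ge_atTop 3] with N h1 h2
    exact ⟨h2, h1⟩
  obtain ⟨N₀, hN₀⟩ := eventually_atTop.mp hev
  refine ⟨N₀, fun N hN => ?_⟩
  obtain ⟨hN3, hkey⟩ := hN₀ N hN
  have hN1 : (1:ℝ) < (N:ℝ) := by
    have : (3:ℝ) ≤ (N:ℝ) := by exact_mod_cast hN3
    linarith
  have hL : 0 < Real.log N := Real.log_pos hN1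
  set L := Real.log (N:ℝ) with hLdef
  set K := (N:ℝ) / L ^ 2 with hKdef
  set t := (c / 2) * L with htdef
  have ht : 0 < t := by positivity
  set a := p * Real.exp (-t) with hadef
  have ha : 0 < a := by positivity
  have hexp : Real.exp t = (N : ℝ) ^ (c / 2 : ℝ) := by
    rw [Real.rpow_def_of_pos (by linarith : (0:ℝ) < (N:ℝ)), htdef, hLdef, mul_comm]
  -- Step A: Chernoff-style termwise bound + binomial theorem
  have stepA : (∑ k ∈ Finset.range (N + 1),
        if (k : ℝ) ≤ K then (N.choose k : ℝ) * p ^ k * q ^ (N - k) else 0)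
      ≤ Real.exp (t * K) * (a + q) ^ N := by
    have h1 : ∀ k ∈ Finset.range (N + 1),
        (if (k : ℝ) ≤ K then (N.choose k : ℝ) * p ^ k * q ^ (N - k) else 0)
        ≤ Real.exp (t * K) * (a ^ k * q ^ (N - k) * (N.choose k : ℝ)) := by
      intro k _
      by_cases hk : (k : ℝ) ≤ K
      · simp only [if_pos hk]
        have heq : Real.exp (t * K) * (a ^ k * q ^ (N - k) * (N.choose k : ℝ))
            = Real.exp (t * (K - k)) * ((N.choose k : ℝ) * p ^ k * q ^ (N - k)) := by
          rw [hadef, mul_pow, ← Real.exp_nat_mul,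
            show Real.exp (t * (K - (k:ℝ))) = Real.exp (t * K) * Real.exp ((k:ℝ) * -t) from by
              rw [← Real.exp_add]; ring_nf]
          ring
        rw [heq]
        have h2 : 1 ≤ Real.exp (t * (K - k)) :=
          Real.one_le_exp (by nlinarith)
        nlinarith [mul_nonneg (mul_nonneg (Nat.cast_nonneg (N.choose k))
          (pow_nonneg hp.le k)) (pow_nonneg hq.le (N - k))]
      · simp only [if_neg hk]
        positivity
    calc _ ≤ ∑ k ∈ Finset.range (N + 1),
          Real.exp (t * K) * (a ^ k * q ^ (N - k) * (N.choose k : ℝ)) :=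
        Finset.sum_le_sum h1
      _ = Real.exp (t * K) * ∑ k ∈ Finset.range (N + 1),
          a ^ k * q ^ (N - k) * (N.choose k : ℝ) := by rw [Finset.mul_sum]
      _ = Real.exp (t * K) * (a + q) ^ N := by rw [← add_pow]
  -- Step B
  have stepB : (a + q) ^ N ≤ Real.exp ((N : ℝ) * (Real.log q + a / q)) := by
    have h1 : a + q ≤ q * Real.exp (a / q) := by
      have h2 := Real.add_one_le_exp (a / q)
      have h3 : q * (a / q + 1) = a + q := by field_simp
      nlinarith
    calc (a + q) ^ N ≤ (q * Real.exp (a / q)) ^ N :=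
        pow_le_pow_left₀ (by positivity) h1 N
      _ = Real.exp ((N : ℝ) * (Real.log q + a / q)) := by
        rw [show q * Real.exp (a / q) = Real.exp (Real.log q + a / q) by
          rw [Real.exp_add, Real.exp_log hq], ← Real.exp_nat_mul]
  -- Step C: exponent comparison
  have htK : t * K = c / 2 * ((N : ℝ) / L) := by
    rw [htdef, hKdef]
    field_simp
  have hdivs : p * Real.exp (-t) / q ≤ (c / 2) / L := by
    have h5 : p * L ≤ c / 2 * Real.exp t * q := by
      rw [div_mul_eq_mul_div, div_le_iff₀ hq] at hkey
      rw [← hexp] at hkey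
      linarith
    rw [div_le_div_iff₀ hq hL, Real.exp_neg]
    have hEpos := Real.exp_pos t
    rw [mul_right_comm, ← div_eq_mul_inv, div_le_iff₀ hEpos]
    linarith [h5]
  have hEa : (N : ℝ) * (a / q) ≤ c / 2 * ((N : ℝ) / L) := by
    have := mul_le_mul_of_nonneg_left hdivs (Nat.cast_nonneg N : (0:ℝ) ≤ (N:ℝ))
    rw [hadef]
    calc (N : ℝ) * (p * Real.exp (-t) / q) ≤ (N : ℝ) * ((c / 2) / L) := this
      _ = c / 2 * ((N : ℝ) / L) := by ring
  have stepC : Real.exp (t * K) * Real.exp ((N : ℝ) * (Real.log q + a / q))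
      ≤ q ^ ((N : ℝ) - (N : ℝ) / L) := by
    rw [← Real.exp_add, Real.rpow_def_of_pos hq]
    apply Real.exp_le_exp.mpr
    have hexpand : Real.log q * ((N : ℝ) - (N : ℝ) / L)
        = (N : ℝ) * Real.log q + c * ((N : ℝ) / L) := by
      simp only [hcdef]; ring
    rw [hexpand]
    have : (N : ℝ) * (Real.log q + a / q) = (N : ℝ) * Real.log q + (N : ℝ) * (a / q) := by
      ring
    rw [this, htK]
    linarith
  calc (∑ k ∈ Finset.range (N + 1),
        if (k : ℝ) ≤ K then (N.choose k : ℝ) * p ^ k * q ^ (N - k) else 0)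
      ≤ Real.exp (t * K) * (a + q) ^ N := stepA
    _ ≤ Real.exp (t * K) * Real.exp ((N : ℝ) * (Real.log q + a / q)) := by
        exact mul_le_mul_of_nonneg_left stepB (Real.exp_pos _).le
    _ ≤ q ^ ((N : ℝ) - (N : ℝ) / L) := stepC
end

section
/- Let $\ell \ge 3$ and $s_1 \le s_2 \le \dots \le s_\ell$ be positive integers. Let $H$ be a graph whose vertex set is partitioned as $A \sqcup B$ such that: $H[A]$ contains no copy of $K_\ell$ and no copy of the complete $(\ell-1)$-partite graph with all parts of size $s_1$; $H[B]$ is a disjoint union of cliques each of size at most $s_2$; and arbitrary edges may be present between $A$ and $B$. Then $H$ contains no copy of the complete $\ell$-partite graph $K_{s_1, \dots, s_\ell}$. -/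
namespace SimpleGraph

lemma hasCopy_iff_isContained {α β : Type*} {F : SimpleGraph α} {H : SimpleGraph β} :
    HasCopy F H ↔ F ⊑ H :=
  ⟨fun ⟨f, hf, hadj⟩ => ⟨⟨⟨f, hadj _ _⟩, hf⟩⟩,
    fun ⟨f⟩ => ⟨f, f.injective, fun _ _ => f.toHom.map_adj⟩⟩

variable {ι κ W : Type*} {V : ι → Type*} {H : SimpleGraph W}

lemma completeMultipartiteGraph_isContained_of_embedding {U : κ → Type*} (e : κ ↪ ι)
    (u : ∀ k, U k ↪ V (e k)) : completeMultipartiteGraph U ⊑ completeMultipartiteGraph V := by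
  refine ⟨⟨⟨fun v => ⟨e v.1, u v.1 v.2⟩, fun h => e.injective.ne h⟩, ?_⟩⟩
  rintro ⟨k, x⟩ ⟨k', x'⟩ h
  obtain ⟨hk, hx⟩ := Sigma.mk.inj_iff.mp h
  obtain rfl := e.injective hk
  exact Sigma.ext rfl (heq_of_eq ((u k).injective (eq_of_heq hx)))

lemma completeMultipartiteGraph_preimage_isContained_induce
    (f : Copy (completeMultipartiteGraph V) H) (A : Set W) :
    completeMultipartiteGraph (fun i => {x : V i // f ⟨i, x⟩ ∈ A}) ⊑ H.induce A := by
  refine ⟨⟨⟨fun v => ⟨f ⟨v.1, v.2⟩, v.2.2⟩, fun h => f.toHom.map_adj h⟩, ?_⟩⟩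
  rintro ⟨i, x⟩ ⟨j, y⟩ h
  obtain ⟨rfl, hxy⟩ := Sigma.mk.inj_iff.mp (f.injective (congrArg Subtype.val h))
  exact Sigma.ext rfl (heq_of_eq (Subtype.ext (eq_of_heq hxy)))

lemma isClique_union_of_forall_adj {B X Y : Set W}
    (hB : ∀ a b c, a ∈ B → b ∈ B → c ∈ B → H.Adj a b → H.Adj b c → a ≠ c → H.Adj a c)
    (hX : X ⊆ B) (hY : Y ⊆ B) {x₀ y₀ : W} (hx₀ : x₀ ∈ X) (hy₀ : y₀ ∈ Y)
    (hXY : ∀ x ∈ X, ∀ y ∈ Y, H.Adj x y) : H.IsClique (X ∪ Y) := by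
  rintro a (ha | ha) b (hb | hb) hab
  · exact hB a y₀ b (hX ha) (hY hy₀) (hX hb) (hXY a ha y₀ hy₀) (hXY b hb y₀ hy₀).symm hab
  · exact hXY a ha b hb
  · exact (hXY b hb a ha).symm
  · exact hB a x₀ b (hY ha) (hX hx₀) (hY hb) (hXY x₀ hx₀ a ha).symm (hXY x₀ hx₀ b hb) hab

lemma card_add_card_preimage_compl_le [∀ i, Finite (V i)]
    (f : Copy (completeMultipartiteGraph V) H) {A : Set W}
    (hB : ∀ a b c, a ∉ A → b ∉ A → c ∉ A → H.Adj a b → H.Adj b c → a ≠ c → H.Adj a c)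
    {N : ℕ} (hN : ∀ t : Set W, t ⊆ Aᶜ → H.IsClique t → t.ncard ≤ N) {i j : ι} (hij : i ≠ j)
    {x₀ : V i} (hi : ∀ x, f ⟨i, x⟩ ∉ A) {y₀ : V j} (hy₀ : f ⟨j, y₀⟩ ∉ A) :
    Nat.card (V i) + Nat.card {y : V j // f ⟨j, y⟩ ∉ A} ≤ N := by
  set X := Set.range fun x : V i => f ⟨i, x⟩
  set Y := Set.range fun y : {y : V j // f ⟨j, y⟩ ∉ A} => f ⟨j, y⟩
  have hXB : X ⊆ Aᶜ := by rintro _ ⟨x, rfl⟩; exact hi x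
  have hYB : Y ⊆ Aᶜ := by rintro _ ⟨y, rfl⟩; exact y.2
  have hXY : ∀ x ∈ X, ∀ y ∈ Y, H.Adj x y := by
    rintro _ ⟨x, rfl⟩ _ ⟨y, rfl⟩
    exact f.toHom.map_adj hij
  have hdisj : Disjoint X Y :=
    Set.disjoint_left.mpr fun a ha ha' => H.loopless.irrefl a (hXY a ha a ha')
  have hinj (k : ι) : Function.Injective fun y : V k => f ⟨k, y⟩ :=
    f.injective.comp sigma_mk_injective
  calc Nat.card (V i) + Nat.card {y : V j // f ⟨j, y⟩ ∉ A} = (X ∪ Y).ncard := by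
        rw [Set.ncard_union_eq hdisj, Set.ncard_range_of_injective (hinj i),
          ← Set.ncard_range_of_injective ((hinj j).comp Subtype.val_injective)]
        rfl
    _ ≤ N := hN _ (Set.union_subset hXB hYB)
        (isClique_union_of_forall_adj hB hXB hYB ⟨x₀, rfl⟩ ⟨⟨y₀, hy₀⟩, rfl⟩ hXY)

lemma _root_.Monotone.add_le_of_add_le_apply_one {n : ℕ} {s : Fin n → ℕ} (hs : Monotone s)
    (hn : 1 < n) {i j : Fin n} (hij : i ≠ j) {b : ℕ} (hb : s i + b ≤ s ⟨1, hn⟩) :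
    s ⟨0, by omega⟩ + b ≤ s j := by
  rcases hij.lt_or_gt with hlt | hlt
  · have h1 : s ⟨1, hn⟩ ≤ s j := hs (Fin.mk_le_of_le_val (by omega))
    have h0 : s ⟨0, by omega⟩ ≤ s i := hs (Fin.mk_le_of_le_val (by omega))
    omega
  · have h1 : s ⟨1, hn⟩ ≤ s i := hs (Fin.mk_le_of_le_val (by omega))
    have h0 : s ⟨0, by omega⟩ ≤ s j := hs (Fin.mk_le_of_le_val (by omega))
    omega

lemma apply_zero_le_card_preimage {ℓ : ℕ} (hℓ : 1 < ℓ) {s : Fin ℓ → ℕ} (hs : Monotone s)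
    (f : Copy (completeMultipartiteGraph fun i => Fin (s i)) H) {A : Set W}
    (hB : ∀ a b c, a ∉ A → b ∉ A → c ∉ A → H.Adj a b → H.Adj b c → a ≠ c → H.Adj a c)
    (hN : ∀ t : Set W, t ⊆ Aᶜ → H.IsClique t → t.ncard ≤ s ⟨1, hℓ⟩) {i j : Fin ℓ}
    (hij : i ≠ j) (hi : ∀ x, f ⟨i, x⟩ ∉ A) :
    s ⟨0, by omega⟩ ≤ Nat.card {y : Fin (s j) // f ⟨j, y⟩ ∈ A} := by
  classical
  have hmin (k : Fin ℓ) : s ⟨0, by omega⟩ ≤ s k := hs (Fin.mk_le_of_le_val (Nat.zero_le _))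
  have hsplit : Nat.card {y // f ⟨j, y⟩ ∈ A} + Nat.card {y // f ⟨j, y⟩ ∉ A} = s j := by
    simp only [Nat.card_eq_fintype_card, Fintype.card_subtype_compl, Fintype.card_fin]
    have := Fintype.card_subtype_le fun y : Fin (s j) => f ⟨j, y⟩ ∈ A
    rw [Fintype.card_fin] at this
    omega
  obtain hi₀ | hi₀ := Nat.eq_zero_or_pos (s i)
  · have := hmin i
    omega
  by_cases hinA : ∀ y, f ⟨j, y⟩ ∈ A
  · have hempty : Nat.card {y // f ⟨j, y⟩ ∉ A} = 0 := by simp [hinA]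
    have := hmin j
    omega
  obtain ⟨y₀, hy₀⟩ := not_forall.mp hinA
  have hclique := card_add_card_preimage_compl_le f hB hN hij (x₀ := ⟨0, hi₀⟩) hi hy₀
  rw [Nat.card_eq_fintype_card, Fintype.card_fin] at hclique
  have := hs.add_le_of_add_le_apply_one hℓ hij hclique
  omega

end SimpleGraph

open SimpleGraph in
theorem stmt10 {W : Type*} (ℓ : ℕ) (hℓ : 3 ≤ ℓ) (s : Fin ℓ → ℕ)
    (hmono : Monotone s)
    (H : SimpleGraph W) (A : Set W)
    (hKl : ¬ HasCopy (SimpleGraph.completeGraph (Fin ℓ)) (H.induce A))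
    (hKmp : ¬ HasCopy (SimpleGraph.completeMultipartiteGraph (fun _ : Fin (ℓ - 1) => Fin (s ⟨0, by omega⟩)))
      (H.induce A))
    (hBclust : ∀ a b c, a ∉ A → b ∉ A → c ∉ A →
      H.Adj a b → H.Adj b c → a ≠ c → H.Adj a c)
    (hBsize : ∀ t : Set W, t ⊆ Aᶜ → H.IsClique t → t.ncard ≤ s ⟨1, by omega⟩) :
    ¬ HasCopy (SimpleGraph.completeMultipartiteGraph (fun i => Fin (s i))) H := by
  classical
  rw [hasCopy_iff_isContained] at hKl hKmp ⊢
  rintro ⟨f⟩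
  have hA := completeMultipartiteGraph_preimage_isContained_induce f A
  by_cases hall : ∀ i, Nonempty {x : Fin (s i) // f ⟨i, x⟩ ∈ A}
  · exact hKl <|
      (completeMultipartiteGraph.topEmbedding _ fun i => (hall i).some).isContained.trans hA
  obtain ⟨i₀, hi₀⟩ := not_forall.mp hall
  obtain ⟨e⟩ : Nonempty (Fin (ℓ - 1) ↪ {j // j ≠ i₀}) :=
    Function.Embedding.nonempty_of_card_le (by simp)
  have hlarge (k : Fin (ℓ - 1)) :
      Nonempty (Fin (s ⟨0, by omega⟩) ↪ {x : Fin (s (e k)) // f ⟨e k, x⟩ ∈ A}) := by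
    refine Function.Embedding.nonempty_of_card_le ?_
    rw [Fintype.card_fin, ← Nat.card_eq_fintype_card]
    exact apply_zero_le_card_preimage (by omega) hmono f hBclust hBsize (e k).2.symm
      fun x hx => hi₀ ⟨⟨x, hx⟩⟩
  exact hKmp <| (completeMultipartiteGraph_isContained_of_embedding
    (e.trans (Function.Embedding.subtype _)) fun k => (hlarge k).some).trans hA
end
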